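/- arXiv:2408.02383 — 6 statements merged into one kernel-verified Lean document; each statement's English description precedes it below -/
import Mathlib

section
/- Let d be a prime, N ≥ 1, and let e ∈ (ZMod d)^N × (ZMod d)^N be a nonzero error element. Then the unitary matrix W(e) has exactly d distinct eigenvalues, and for every eigenvalue μ of W(e) the eigenspace {v ∈ ℂ^{d^N} : W(e) v = μ v} has complex dimension d^{N−1}. -/
/-!
Weyl operators commute up to a phase: `W(e) W(e') = ω^⟨e, e'⟩ W(e') W(e)` with `⟨·, ·⟩` the
symplectic form, and `W(e)^d` is a nonzero scalar `c`. For `e ≠ 0` some `e'` has `⟨e, e'⟩ ≠ 0`,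
so, `d` being prime, `u = ω^⟨e, e'⟩` is a primitive `d`-th root of unity. The separable polynomial
`X^d - c` annihilates `W(e)`, so `W(e)` is diagonalisable with eigenvalues among the `d`-th roots of
`c`, while the invertible `W(e')` maps the `μ`-eigenspace onto the `uμ`-eigenspace. Hence all `d`
roots occur, with eigenspaces of equal dimension, which is therefore `d^N / d`.
-/

open Matrix Complex

noncomputable section

/-- ω = exp(2πi/d). -/
def omga (d : ℕ) : ℂ := Complex.exp (2 * Real.pi * Complex.I / d)

/-- The Weyl operator W_{k,l}: (j,j') entry is ω^{jk} if j' = j + l, else 0. -/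
def weyl (d : ℕ) (k l : ZMod d) : Matrix (ZMod d) (ZMod d) ℂ :=
  Matrix.of fun j j' => if j' = j + l then omga d ^ (j * k).val else 0

/-- N-fold Kronecker product W(e) = W_{k₁,l₁} ⊗ ⋯ ⊗ W_{k_N,l_N}, indexed by Fin N → ZMod d. -/
def weylN (d N : ℕ) (e : (Fin N → ZMod d) × (Fin N → ZMod d)) :
    Matrix (Fin N → ZMod d) (Fin N → ZMod d) ℂ :=
  Matrix.of fun j j' => ∏ n, weyl d (e.1 n) (e.2 n) (j n) (j' n)

theorem isUnit_of_pow_eq_smul_one {R A : Type*} [CommSemiring R] [Semiring A] [Algebra R A]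
    {a : A} {n : ℕ} {c : R} (hn : n ≠ 0) (hc : IsUnit c) (h : a ^ n = c • 1) : IsUnit a :=
  (isUnit_pow_iff hn).mp <| by
    rw [h, ← Algebra.algebraMap_eq_smul_one]
    exact hc.map _

theorem AddChar.map_sum_eq_prod {ι A M : Type*} [AddCommMonoid A] [CommMonoid M]
    (ψ : AddChar A M) (s : Finset ι) (f : ι → A) : ψ (∑ i ∈ s, f i) = ∏ i ∈ s, ψ (f i) := by
  induction s using Finset.cons_induction with
  | empty => simp
  | cons a s ha ih => rw [Finset.sum_cons, Finset.prod_cons, map_add_eq_mul, ih]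

open Module in
theorem DirectSum.IsInternal.finrank_eq_sum {K V ι : Type*} [Field K] [AddCommGroup V]
    [Module K V] [FiniteDimensional K V] [Fintype ι] [DecidableEq ι] {A : ι → Submodule K V}
    (hA : DirectSum.IsInternal A) : finrank K V = ∑ i, finrank K (A i) := by
  rw [← (LinearEquiv.ofBijective (DirectSum.coeLinearMap A) hA).finrank_eq, finrank_directSum]

open Polynomial in
theorem IsPrimitiveRoot.exists_pow_mul_eq {R : Type*} [CommRing R] [IsDomain R] {u α β a : R}
    {n : ℕ} (hu : IsPrimitiveRoot u n) (hn : 0 < n) (hα : α ^ n = a) (hβ : β ^ n = a) :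
    ∃ i, β = u ^ i * α := by
  have hβ' : β ∈ (Multiset.range n).map (u ^ · * α) := by
    rw [← hu.nthRoots_eq hα, mem_nthRoots hn]; exact hβ
  obtain ⟨i, -, rfl⟩ := Multiset.mem_map.mp hβ'
  exact ⟨i, rfl⟩

open Polynomial in
theorem IsPrimitiveRoot.card_nthRootsFinset_of_pow_eq {R : Type*} [CommRing R] [IsDomain R]
    {u α a : R} {n : ℕ} (hu : IsPrimitiveRoot u n) (hα : α ^ n = a) (ha : a ≠ 0) :
    (nthRootsFinset n a).card = n := by
  classical
  rw [nthRootsFinset_def, Multiset.toFinset_card_of_nodup (hu.nthRoots_nodup ha),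
    hu.card_nthRoots, if_pos ⟨α, hα⟩]

namespace Module.End

open Polynomial

variable {K V : Type*} [Field K] [AddCommGroup V] [Module K V]

section Shift

variable {f g : End K V} {u : K} (hu : u ≠ 0) (hg : IsUnit g) (hfg : f * g = u • (g * f))
include hu hg hfg

theorem eigenspace_mul_eq_map (μ : K) :
    f.eigenspace (u * μ) = (f.eigenspace μ).map g := by
  let G := LinearEquiv.ofBijective g ((Module.End.isUnit_iff g).mp hg)
  ext w
  obtain ⟨v, rfl⟩ := G.surjective w
  change _ ↔ G v ∈ (f.eigenspace μ).map (G : V →ₗ[K] V)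
  rw [Submodule.mem_map_equiv, G.symm_apply_apply, mem_eigenspace_iff, mem_eigenspace_iff,
    show f (G v) = u • G (f v) from LinearMap.congr_fun hfg v, mul_smul,
    (smul_right_injective V hu).eq_iff, ← G.map_smul, G.injective.eq_iff]

theorem finrank_eigenspace_mul (μ : K) :
    finrank K (f.eigenspace (u * μ)) = finrank K (f.eigenspace μ) := by
  rw [eigenspace_mul_eq_map hu hg hfg]
  exact (LinearEquiv.ofBijective g ((Module.End.isUnit_iff g).mp hg)).finrank_map_eq _

theorem hasEigenvalue_mul_iff (μ : K) : f.HasEigenvalue (u * μ) ↔ f.HasEigenvalue μ := by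
  let G := LinearEquiv.ofBijective g ((Module.End.isUnit_iff g).mp hg)
  rw [hasEigenvalue_iff, hasEigenvalue_iff, eigenspace_mul_eq_map hu hg hfg]
  exact (Submodule.map_eq_bot_iff (e := G)).not

theorem finrank_eigenspace_pow_mul (i : ℕ) (μ : K) :
    finrank K (f.eigenspace (u ^ i * μ)) = finrank K (f.eigenspace μ) := by
  induction i with
  | zero => rw [pow_zero, one_mul]
  | succ i ih => rw [pow_succ', mul_assoc, finrank_eigenspace_mul hu hg hfg, ih]

theorem hasEigenvalue_pow_mul_iff (i : ℕ) (μ : K) :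
    f.HasEigenvalue (u ^ i * μ) ↔ f.HasEigenvalue μ := by
  induction i with
  | zero => rw [pow_zero, one_mul]
  | succ i ih => rw [pow_succ', mul_assoc, hasEigenvalue_mul_iff hu hg hfg, ih]

end Shift

section PowEqSmulOne

variable {f : End K V} {n : ℕ} {c : K}

theorem HasEigenvalue.pow_eq_of_pow_eq_smul_one (hf : f ^ n = c • 1) {μ : K}
    (hμ : f.HasEigenvalue μ) : μ ^ n = c := by
  obtain ⟨v, hv⟩ := hμ.exists_hasEigenvector
  have := hv.pow_apply n
  rw [hf, LinearMap.smul_apply, one_apply] at this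
  exact (smul_left_injective K hv.2 this).symm

theorem isSemisimple_of_pow_eq_smul_one (hn : (n : K) ≠ 0) (hc : c ≠ 0) (hf : f ^ n = c • 1) :
    f.IsSemisimple :=
  isSemisimple_of_squarefree_aeval_eq_zero (separable_X_pow_sub_C c hn hc).squarefree <| by
    rw [map_sub, map_pow, aeval_X, aeval_C, hf, Algebra.algebraMap_eq_smul_one, sub_self]

end PowEqSmulOne

theorem finrank_eq_sum_finrank_eigenspace [IsAlgClosed K] [FiniteDimensional K V] {f : End K V}
    (hf : f.IsSemisimple) {s : Finset K} (hs : ∀ μ, f.HasEigenvalue μ → μ ∈ s) :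
    finrank K V = ∑ μ ∈ s, finrank K (f.eigenspace μ) := by
  classical
  have hind : iSupIndep fun μ : s => f.eigenspace μ :=
    f.eigenspaces_iSupIndep.comp Subtype.val_injective
  have htop : ⨆ μ : s, f.eigenspace μ = ⊤ := by
    refine le_antisymm le_top (hf.iSup_eigenspace_eq_top ▸ iSup_le fun μ => ?_)
    by_cases hμ : f.HasEigenvalue μ
    · exact le_iSup (fun ν : s => f.eigenspace ν) ⟨μ, hs μ hμ⟩
    · rw [hasEigenvalue_iff, not_not] at hμ
      exact hμ ▸ bot_le
  rw [((DirectSum.isInternal_submodule_iff_iSupIndep_and_iSup_eq_top _).mpr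
    ⟨hind, htop⟩).finrank_eq_sum, Finset.sum_coe_sort s fun μ => finrank K (f.eigenspace μ)]

section ClockShift

variable {f g : End K V} {u c : K} {d : ℕ} [NeZero d] (hu : IsPrimitiveRoot u d)
  (hf : f ^ d = c • 1) (hg : IsUnit g) (hfg : f * g = u • (g * f))
include hu hf hg hfg

theorem hasEigenvalue_iff_pow_eq {μ₀ : K} (hμ₀ : f.HasEigenvalue μ₀) (μ : K) :
    f.HasEigenvalue μ ↔ μ ^ d = c := by
  refine ⟨HasEigenvalue.pow_eq_of_pow_eq_smul_one hf, fun hμ => ?_⟩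
  obtain ⟨i, rfl⟩ := hu.exists_pow_mul_eq (NeZero.pos d) (hμ₀.pow_eq_of_pow_eq_smul_one hf) hμ
  exact (hasEigenvalue_pow_mul_iff (hu.ne_zero (NeZero.ne d)) hg hfg i μ₀).mpr hμ₀

theorem finrank_eigenspace_eq_of_pow_eq {μ₀ μ : K} (hμ₀ : f.HasEigenvalue μ₀)
    (hμ : μ ^ d = c) :
    finrank K (f.eigenspace μ) = finrank K (f.eigenspace μ₀) := by
  obtain ⟨i, rfl⟩ := hu.exists_pow_mul_eq (NeZero.pos d) (hμ₀.pow_eq_of_pow_eq_smul_one hf) hμ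
  exact finrank_eigenspace_pow_mul (hu.ne_zero (NeZero.ne d)) hg hfg i μ₀

theorem ncard_setOf_hasEigenvalue_and_mul_finrank_eigenspace [IsAlgClosed K]
    [FiniteDimensional K V] [Nontrivial V] (hc : c ≠ 0) :
    {μ | f.HasEigenvalue μ}.ncard = d ∧
      ∀ μ, f.HasEigenvalue μ → d * finrank K (f.eigenspace μ) = finrank K V := by
  obtain ⟨μ₀, hμ₀⟩ := f.exists_eigenvalue
  have hroots (μ : K) : f.HasEigenvalue μ ↔ μ ∈ nthRootsFinset d c := by
    rw [mem_nthRootsFinset (NeZero.pos d)]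
    exact hasEigenvalue_iff_pow_eq hu hf hg hfg hμ₀ μ
  have hcard : (nthRootsFinset d c).card = d :=
    hu.card_nthRootsFinset_of_pow_eq (hμ₀.pow_eq_of_pow_eq_smul_one hf) hc
  have hsemisimple : f.IsSemisimple := isSemisimple_of_pow_eq_smul_one hu.neZero'.ne hc hf
  refine ⟨?_, fun μ hμ => ?_⟩
  · rw [show {μ | f.HasEigenvalue μ} = nthRootsFinset d c from Set.ext hroots,
      Set.ncard_coe_finset, hcard]
  · rw [finrank_eq_sum_finrank_eigenspace hsemisimple fun ν => (hroots ν).mp,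
      Finset.sum_congr rfl fun ν hν => finrank_eigenspace_eq_of_pow_eq hu hf hg hfg hμ
        ((mem_nthRootsFinset (NeZero.pos d) c).mp hν), Finset.sum_const, hcard, smul_eq_mul]

end ClockShift

end Module.End

namespace ZMod

variable {d : ℕ} [NeZero d]

theorem omga_pow_val (m : ZMod d) : omga d ^ m.val = stdAddChar m := by
  rw [stdAddChar_apply, toCircle_apply, omga, ← Complex.exp_nat_mul]
  congr 1
  ring

theorem stdAddChar_ne_zero (a : ZMod d) : stdAddChar a ≠ 0 := by
  rw [stdAddChar_apply]; exact Circle.coe_ne_zero _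

theorem isPrimitiveRoot_stdAddChar (hd : d.Prime) {a : ZMod d} (ha : a ≠ 0) :
    IsPrimitiveRoot (stdAddChar a) d := by
  have : Fact d.Prime := ⟨hd⟩
  rw [IsPrimitiveRoot.iff_orderOf]
  refine orderOf_eq_prime ?_ ?_
  · rw [← AddChar.map_nsmul_eq_pow, nsmul_eq_mul, natCast_self, zero_mul, AddChar.map_zero_eq_one]
  · rwa [← AddChar.map_zero_eq_one (stdAddChar (N := d)), injective_stdAddChar.ne_iff]

end ZMod

def symplecticForm {R ι : Type*} [CommRing R] [Fintype ι] (e e' : (ι → R) × (ι → R)) : R :=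
  e.2 ⬝ᵥ e'.1 - e'.2 ⬝ᵥ e.1

theorem exists_symplecticForm_ne_zero {R ι : Type*} [CommRing R] [Fintype ι] [DecidableEq ι]
    {e : (ι → R) × (ι → R)} (he : e ≠ 0) : ∃ e', symplecticForm e e' ≠ 0 := by
  obtain ⟨n, hn⟩ | ⟨n, hn⟩ : (∃ n, e.1 n ≠ 0) ∨ ∃ n, e.2 n ≠ 0 := by
    by_contra! h
    exact he (Prod.ext (funext h.1) (funext h.2))
  · exact ⟨(0, Pi.single n 1), by simpa [symplecticForm] using hn⟩
  · exact ⟨(Pi.single n 1, 0), by simpa [symplecticForm] using hn⟩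

section WeylN

variable {d N : ℕ} [NeZero d]

theorem weylN_apply (e : (Fin N → ZMod d) × (Fin N → ZMod d)) (j j' : Fin N → ZMod d) :
    weylN d N e j j' = if j' = j + e.2 then ZMod.stdAddChar (j ⬝ᵥ e.1) else 0 := by
  by_cases h : j' = j + e.2
  · subst h
    simp [weylN, weyl, ZMod.omga_pow_val, dotProduct, AddChar.map_sum_eq_prod]
  · obtain ⟨n, hn⟩ := Function.ne_iff.mp h
    rw [if_neg h]
    exact Finset.prod_eq_zero (Finset.mem_univ n) (if_neg hn)

theorem weylN_mul (e e' : (Fin N → ZMod d) × (Fin N → ZMod d)) :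
    weylN d N e * weylN d N e' = ZMod.stdAddChar (e.2 ⬝ᵥ e'.1) • weylN d N (e + e') := by
  ext j j''
  rw [mul_apply, Finset.sum_eq_single (j + e.2)
      (fun k _ hk => by rw [weylN_apply, if_neg hk, zero_mul]) (by simp),
    Matrix.smul_apply, weylN_apply, weylN_apply, weylN_apply, if_pos rfl, Prod.snd_add,
    ← add_assoc]
  split_ifs
  · rw [smul_eq_mul, ← AddChar.map_add_eq_mul, ← AddChar.map_add_eq_mul, add_dotProduct,
      Prod.fst_add, dotProduct_add]
    ring_nf
  · simp

theorem weylN_zero : weylN d N 0 = 1 := by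
  ext j j'
  simp [weylN_apply, one_apply, eq_comm]

theorem weylN_pow (e : (Fin N → ZMod d) × (Fin N → ZMod d)) (m : ℕ) :
    ∃ a : ZMod d, weylN d N e ^ m = ZMod.stdAddChar a • weylN d N (m • e) := by
  induction m with
  | zero => exact ⟨0, by simp [weylN_zero]⟩
  | succ m ih =>
    obtain ⟨a, ha⟩ := ih
    exact ⟨a + (m • e).2 ⬝ᵥ e.1, by
      rw [pow_succ, ha, smul_mul, weylN_mul, smul_smul, ← AddChar.map_add_eq_mul, succ_nsmul]⟩

theorem weylN_pow_card (e : (Fin N → ZMod d) × (Fin N → ZMod d)) :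
    ∃ a : ZMod d, weylN d N e ^ d = ZMod.stdAddChar a • 1 := by
  obtain ⟨a, ha⟩ := weylN_pow e d
  refine ⟨a, ?_⟩
  rwa [show d • e = 0 by ext <;> simp, weylN_zero] at ha

theorem weylN_mul_comm (e e' : (Fin N → ZMod d) × (Fin N → ZMod d)) :
    weylN d N e * weylN d N e' =
      ZMod.stdAddChar (symplecticForm e e') • (weylN d N e' * weylN d N e) := by
  rw [weylN_mul, weylN_mul, add_comm e', smul_smul, ← AddChar.map_add_eq_mul, symplecticForm,
    sub_add_cancel]

theorem toLin'_weylN_pow_card (e : (Fin N → ZMod d) × (Fin N → ZMod d)) :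
    ∃ a : ZMod d, toLin' (weylN d N e) ^ d = ZMod.stdAddChar a • 1 := by
  obtain ⟨a, ha⟩ := weylN_pow_card e
  exact ⟨a, by rw [← toLin'_pow, ha, map_smul, toLin'_one, Module.End.one_eq_id]⟩

end WeylN

/-- for prime d, N ≥ 1 and nonzero error element e, the matrix W(e) has exactly
d distinct eigenvalues, each of whose eigenspaces has dimension d^{N-1}. -/
theorem weylN_eigenvalues_card_and_eigenspace_dim
    (d N : ℕ) [NeZero d] (hd : d.Prime) (hN : 1 ≤ N)
    (e : (Fin N → ZMod d) × (Fin N → ZMod d)) (he : e ≠ 0) :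
    {μ : ℂ | Module.End.HasEigenvalue (Matrix.toLin' (weylN d N e)) μ}.ncard = d ∧
    ∀ μ : ℂ, Module.End.HasEigenvalue (Matrix.toLin' (weylN d N e)) μ →
      Module.finrank ℂ ↥(Module.End.eigenspace (Matrix.toLin' (weylN d N e)) μ) = d ^ (N - 1) := by
  obtain ⟨e', he'⟩ := exists_symplecticForm_ne_zero he
  obtain ⟨a, hf⟩ := toLin'_weylN_pow_card e
  obtain ⟨a', hg⟩ := toLin'_weylN_pow_card e'
  have hfg : toLin' (weylN d N e) * toLin' (weylN d N e') =
      ZMod.stdAddChar (symplecticForm e e') • (toLin' (weylN d N e') * toLin' (weylN d N e)) := by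
    rw [Module.End.mul_eq_comp, Module.End.mul_eq_comp, ← toLin'_mul, ← toLin'_mul,
      weylN_mul_comm, map_smul]
  obtain ⟨hcard, hdim⟩ := Module.End.ncard_setOf_hasEigenvalue_and_mul_finrank_eigenspace
    (ZMod.isPrimitiveRoot_stdAddChar hd he') hf
    (isUnit_of_pow_eq_smul_one hd.ne_zero (ZMod.stdAddChar_ne_zero a').isUnit hg) hfg
    (ZMod.stdAddChar_ne_zero a)
  refine ⟨hcard, fun μ hμ => Nat.eq_of_mul_eq_mul_left hd.pos ?_⟩
  rw [hdim μ hμ, Module.finrank_fintype_fun_eq_card, Fintype.card_fun, ZMod.card,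
    Fintype.card_fin, mul_pow_sub_one (by omega)]

end
end

section
/- Let U be an encoding for g₁,…,g_p with scalars μ₁,…,μ_p, and let V be a unitary d^N × d^N matrix (columns indexed like those of U). Then V is an encoding for g₁,…,g_p with the same scalars μ₁,…,μ_p if and only if there exists a family of unitary d^{N−p} × d^{N−p} matrices (Y_x)_{x ∈ Fin p → ZMod d} such that V = U · D, where D is the block-diagonal matrix with ((x',k'),(x,k)) entry δ_{x',x} (Y_x)_{k',k}. -/
open Matrix Complex

noncomputable section

/-- Symplectic product ⟨e,f⟩ = Σₙ (lₙ mₙ − kₙ nₙ). -/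
def symp (d N : ℕ) (e f : (Fin N → ZMod d) × (Fin N → ZMod d)) : ZMod d :=
  ∑ n, (e.2 n * f.1 n - e.1 n * f.2 n)

/-- `U` is an encoding for the error elements `g j` with unimodular scalars `μ j`, with
columns indexed by pairs `(x,k)` via the fixed bijection `ι`: each column
`u_{x,k} = U · e_{ι(x,k)}` is an eigenvector of `W(g j)` with eigenvalue `μ j · ω^{x j}`. -/
def IsEncoding (d N p : ℕ) [NeZero d]
    (g : Fin p → (Fin N → ZMod d) × (Fin N → ZMod d)) (μ : Fin p → ℂ)
    (ι : ((Fin p → ZMod d) × (Fin (N - p) → ZMod d)) ≃ (Fin N → ZMod d))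
    (U : Matrix (Fin N → ZMod d) (Fin N → ZMod d) ℂ) : Prop :=
  ∀ (j : Fin p) (x : Fin p → ZMod d) (k : Fin (N - p) → ZMod d),
    (weylN d N (g j)).mulVec (fun r => U r (ι (x, k))) =
      (μ j * omga d ^ (x j).val) • (fun r => U r (ι (x, k)))

lemma omga_pow_inj (d : ℕ) [NeZero d] {a b : ZMod d}
    (h : omga d ^ a.val = omga d ^ b.val) : a = b := by
  have hprim := Complex.isPrimitiveRoot_exp d (NeZero.ne d)
  exact ZMod.val_injective d (hprim.pow_inj a.val_lt b.val_lt h)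

lemma isEncoding_iff (d N p : ℕ) [NeZero d]
    (g : Fin p → (Fin N → ZMod d) × (Fin N → ZMod d)) (μ : Fin p → ℂ)
    (ι : ((Fin p → ZMod d) × (Fin (N - p) → ZMod d)) ≃ (Fin N → ZMod d))
    (M : Matrix (Fin N → ZMod d) (Fin N → ZMod d) ℂ) :
    IsEncoding d N p g μ ι M ↔ ∀ j, weylN d N (g j) * M =
      M * Matrix.diagonal (fun r => μ j * omga d ^ ((ι.symm r).1 j).val) := by
  constructor
  · intro h j
    ext r c
    obtain ⟨⟨x, k⟩, rfl⟩ := ι.surjective c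
    have h2 := congrFun (h j x k) r
    simp only [Matrix.mulVec, dotProduct, Pi.smul_apply, smul_eq_mul] at h2
    rw [Matrix.mul_apply, Matrix.mul_diagonal, Equiv.symm_apply_apply, h2, mul_comm]
  · intro h j x k
    funext r
    have h2 := congrFun (congrFun (h j) r) (ι (x, k))
    rw [Matrix.mul_apply, Matrix.mul_diagonal, Equiv.symm_apply_apply] at h2
    simp only [Matrix.mulVec, dotProduct, Pi.smul_apply, smul_eq_mul]
    rw [h2, mul_comm]

/-- characterization of all encodings: a unitary V is an encoding for the same
generators and scalars iff V = U · D for a block-diagonal D built from a family of unitary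
matrices (Y_x). -/
theorem encoding_characterization
    (d N p : ℕ) [NeZero d] (hd : d.Prime) (hN : 1 ≤ N) (hp : p ≤ N)
    (g : Fin p → (Fin N → ZMod d) × (Fin N → ZMod d))
    (μ : Fin p → ℂ) (hμ : ∀ j, ‖μ j‖ = 1)
    (ι : ((Fin p → ZMod d) × (Fin (N - p) → ZMod d)) ≃ (Fin N → ZMod d))
    (U V : Matrix (Fin N → ZMod d) (Fin N → ZMod d) ℂ)
    (hU : U ∈ Matrix.unitaryGroup (Fin N → ZMod d) ℂ)
    (hEnc : IsEncoding d N p g μ ι U)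
    (hV : V ∈ Matrix.unitaryGroup (Fin N → ZMod d) ℂ) :
    IsEncoding d N p g μ ι V ↔
      ∃ Y : (Fin p → ZMod d) →
          Matrix (Fin (N - p) → ZMod d) (Fin (N - p) → ZMod d) ℂ,
        (∀ x, Y x ∈ Matrix.unitaryGroup (Fin (N - p) → ZMod d) ℂ) ∧
        V = U * Matrix.of (fun r c =>
          if (ι.symm r).1 = (ι.symm c).1
          then Y (ι.symm c).1 (ι.symm r).2 (ι.symm c).2 else 0) := by
  set Λ : Fin p → Matrix (Fin N → ZMod d) (Fin N → ZMod d) ℂ :=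
    fun j => Matrix.diagonal (fun r => μ j * omga d ^ ((ι.symm r).1 j).val) with hΛ
  have hμ0 : ∀ j, μ j ≠ 0 := fun j => by
    intro h; simpa [h] using hμ j
  have hUeq : ∀ j, weylN d N (g j) * U = U * Λ j :=
    (isEncoding_iff d N p g μ ι U).mp hEnc
  constructor
  · intro hEncV
    have hVeq : ∀ j, weylN d N (g j) * V = V * Λ j :=
      (isEncoding_iff d N p g μ ι V).mp hEncV
    set D := star U * V with hD
    have hDu : D ∈ Matrix.unitaryGroup (Fin N → ZMod d) ℂ :=
      mul_mem (Unitary.star_mem hU) hV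
    have hUD : U * D = V := by
      rw [hD, ← Matrix.mul_assoc, Matrix.mem_unitaryGroup_iff.mp hU, Matrix.one_mul]
    have hstarU : ∀ j, star U * weylN d N (g j) = Λ j * star U := by
      intro j
      calc star U * weylN d N (g j)
          = star U * weylN d N (g j) * (U * star U) := by
            rw [Matrix.mem_unitaryGroup_iff.mp hU, Matrix.mul_one]
        _ = star U * (weylN d N (g j) * U) * star U := by
            simp only [Matrix.mul_assoc]
        _ = star U * (U * Λ j) * star U := by rw [hUeq j]
        _ = (star U * U) * Λ j * star U := by simp only [Matrix.mul_assoc]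
        _ = Λ j * star U := by
            rw [Matrix.mem_unitaryGroup_iff'.mp hU, Matrix.one_mul]
    have hcomm : ∀ j, Λ j * D = D * Λ j := by
      intro j
      calc Λ j * D = (Λ j * star U) * V := by rw [hD, Matrix.mul_assoc]
        _ = (star U * weylN d N (g j)) * V := by rw [hstarU j]
        _ = star U * (weylN d N (g j) * V) := by rw [Matrix.mul_assoc]
        _ = star U * (V * Λ j) := by rw [hVeq j]
        _ = D * Λ j := by rw [hD, Matrix.mul_assoc]
    have hvanish : ∀ r c, (ι.symm r).1 ≠ (ι.symm c).1 → D r c = 0 := by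
      intro r c hne
      obtain ⟨j, hj⟩ := Function.ne_iff.mp hne
      have h2 := congrFun (congrFun (hcomm j) r) c
      simp only [hΛ, Matrix.diagonal_mul, Matrix.mul_diagonal] at h2
      by_contra h0
      apply hj
      apply omga_pow_inj d
      have h3 : D r c * (μ j * omga d ^ ((ι.symm r).1 j).val)
          = D r c * (μ j * omga d ^ ((ι.symm c).1 j).val) := by
        rw [← h2, mul_comm]
      exact mul_left_cancel₀ (hμ0 j) (mul_left_cancel₀ h0 h3)
    refine ⟨fun x => Matrix.of (fun k' k => D (ι (x, k')) (ι (x, k))), ?_, ?_⟩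
    · intro x
      rw [Matrix.mem_unitaryGroup_iff']
      have hDD := Matrix.mem_unitaryGroup_iff'.mp hDu
      ext k₁ k₂
      have h2 := congrFun (congrFun hDD (ι (x, k₁))) (ι (x, k₂))
      rw [Matrix.mul_apply] at h2
      rw [Matrix.mul_apply]
      have hsum : ∑ r : Fin N → ZMod d,
          (star D) (ι (x, k₁)) r * D r (ι (x, k₂)) =
          ∑ q : (Fin p → ZMod d) × (Fin (N - p) → ZMod d),
            (star D) (ι (x, k₁)) (ι q) * D (ι q) (ι (x, k₂)) :=
        (Fintype.sum_equiv ι _ _ (fun q => rfl)).symm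
      rw [hsum, Fintype.sum_prod_type] at h2
      rw [Finset.sum_eq_single x ?_ (by simp)] at h2
      · have hone : (1 : Matrix (Fin N → ZMod d) (Fin N → ZMod d) ℂ) (ι (x, k₁)) (ι (x, k₂))
            = (1 : Matrix (Fin (N - p) → ZMod d) (Fin (N - p) → ZMod d) ℂ) k₁ k₂ := by
          simp [Matrix.one_apply, Equiv.apply_eq_iff_eq, Prod.ext_iff]
        rw [hone] at h2
        rw [← h2]
        apply Finset.sum_congr rfl
        intro k' _
        simp [Matrix.star_apply]
      · intro x' _ hx'
        apply Finset.sum_eq_zero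
        intro k' _
        have : D (ι (x', k')) (ι (x, k₁)) = 0 := by
          apply hvanish
          simp only [Equiv.symm_apply_apply]
          exact hx'
        simp [Matrix.star_apply, this]
    · rw [← hUD]
      congr 1
      ext r c
      simp only [Matrix.of_apply]
      by_cases h : (ι.symm r).1 = (ι.symm c).1
      · rw [if_pos h]
        have hr : ι ((ι.symm c).1, (ι.symm r).2) = r := by
          rw [← h]; rw [show ((ι.symm r).1, (ι.symm r).2) = ι.symm r from rfl]
          exact ι.apply_symm_apply r
        have hc : ι ((ι.symm c).1, (ι.symm c).2) = c := by
          rw [show ((ι.symm c).1, (ι.symm c).2) = ι.symm c from rfl]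
          exact ι.apply_symm_apply c
        rw [hr, hc]
      · rw [if_neg h]
        exact hvanish r c h
  · rintro ⟨Y, hYu, rfl⟩
    apply (isEncoding_iff d N p g μ ι _).mpr
    intro j
    have hcommE : Λ j * Matrix.of (fun r c =>
        if (ι.symm r).1 = (ι.symm c).1
        then Y (ι.symm c).1 (ι.symm r).2 (ι.symm c).2 else 0) =
        Matrix.of (fun r c =>
        if (ι.symm r).1 = (ι.symm c).1
        then Y (ι.symm c).1 (ι.symm r).2 (ι.symm c).2 else 0) * Λ j := by
      ext r c
      simp only [hΛ, Matrix.diagonal_mul, Matrix.mul_diagonal, Matrix.of_apply]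
      by_cases h : (ι.symm r).1 = (ι.symm c).1
      · rw [if_pos h, h, mul_comm]
      · rw [if_neg h, mul_zero, zero_mul]
    calc weylN d N (g j) * (U * _) = (weylN d N (g j) * U) * _ := by
          rw [Matrix.mul_assoc]
      _ = U * Λ j * _ := by rw [hUeq j]
      _ = U * (Λ j * _) := by rw [Matrix.mul_assoc]
      _ = U * (_ * Λ j) := by rw [hcommE]
      _ = U * _ * Λ j := by rw [Matrix.mul_assoc]

end
end

section
/- Let U be an encoding for g₁,…,g_p with scalars μ₁,…,μ_p, with codewords u_{x,k} := U e_{(x,k)}. Define the orthogonal projections P(a) := Σ_k u_{a,k} u_{a,k}† and P̄(b) := Σ_k ū_{b,k} ū_{b,k}† (entrywise complex conjugates), and let Ω₀ := d^{−N/2} Σ_i e_i ⊗ e_i ∈ ℂ^{d^N} ⊗ ℂ^{d^N} be the maximally entangled vector. Let e be an error element with s := (⟨g_j,e⟩)_j, and let (T_x)_x realize the block decomposition of U† W(e) U. Then for all a, b ∈ (Fin p → ZMod d), the vector v := (U† ⊗ Uᵀ) (P(a) ⊗ P̄(b)) (W(e) ⊗ 1) Ω₀ has components v_{(x,k),(y,k')}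 = d^{−N/2} · (T_a)_{k,k'} if a = b + s, x = a and y = b, and v_{(x,k),(y,k')} = 0 otherwise. In particular, (P(a) ⊗ P̄(b)) (W(e) ⊗ 1) Ω₀ = 0 whenever a ≠ b + s, and when a = b + s the projected, decoded Bell vector equals d^{−p/2} times the (reordered) tensor product of the basis state pair (e_{b+s}, e_b) with the locally twisted maximally entangled state (T_{b+s} ⊗ 1) Ω₀^{(d^{N−p})}. -/
open Matrix Complex

noncomputable section

open Kronecker

private lemma sum_ite_encode {γ δ ε : Type*} [Fintype γ] [DecidableEq δ] [DecidableEq ε]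
    (ι : (δ × γ) ≃ ε) (z : δ) (i : ε) (f : ε → ℂ) :
    (∑ k : γ, if i = ι (z, k) then f (ι (z, k)) else 0) =
      if (ι.symm i).1 = z then f i else 0 := by
  classical
  by_cases h : (ι.symm i).1 = z
  · rw [if_pos h, Finset.sum_eq_single (ι.symm i).2]
    · have hi : ι (z, (ι.symm i).2) = i := by
        conv_rhs => rw [← ι.apply_symm_apply i]
        rw [← h]
      rw [hi, if_pos rfl]
    · intro k _ hk
      rw [if_neg]
      intro hik
      apply hk
      have h2 := congrArg ι.symm hik
      rw [ι.symm_apply_apply] at h2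
      rw [h2]
    · intro h'
      exact absurd (Finset.mem_univ _) h'
  · rw [if_neg h]
    refine Finset.sum_eq_zero fun k _ => ?_
    rw [if_neg]
    intro hik
    apply h
    have h2 := congrArg ι.symm hik
    rw [ι.symm_apply_apply] at h2
    rw [h2]

/-- effect of stabilizer measurements and decoding on a Bell vector affected by
the error e: the decoded projected vector (U† ⊗ Uᵀ)(P(a) ⊗ P̄(b))(W(e) ⊗ 1)Ω₀ has components
d^{−N/2}(T_a)_{k,k'} at ((x,k),(y,k')) precisely when a = b + s, x = a, y = b, and 0 otherwise;
in particular (P(a) ⊗ P̄(b))(W(e) ⊗ 1)Ω₀ = 0 whenever a ≠ b + s. -/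
theorem projected_decoded_bell_vector
    (d N p : ℕ) [NeZero d] (hd : d.Prime) (hN : 1 ≤ N) (hp : p ≤ N)
    (g : Fin p → (Fin N → ZMod d) × (Fin N → ZMod d))
    (μ : Fin p → ℂ) (hμ : ∀ j, ‖μ j‖ = 1)
    (ι : ((Fin p → ZMod d) × (Fin (N - p) → ZMod d)) ≃ (Fin N → ZMod d))
    (U : Matrix (Fin N → ZMod d) (Fin N → ZMod d) ℂ)
    (hU : U ∈ Matrix.unitaryGroup (Fin N → ZMod d) ℂ)
    (hEnc : IsEncoding d N p g μ ι U)
    (e : (Fin N → ZMod d) × (Fin N → ZMod d))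
    (s : Fin p → ZMod d) (hs : s = fun j => symp d N (g j) e)
    (T : (Fin p → ZMod d) →
      Matrix (Fin (N - p) → ZMod d) (Fin (N - p) → ZMod d) ℂ)
    (hT : ∀ (x x' : Fin p → ZMod d) (k k' : Fin (N - p) → ZMod d),
      (Uᴴ * weylN d N e * U) (ι (x', k')) (ι (x, k)) =
        if x' = x + s then T (x + s) k' k else 0)
    (Ω₀ : ((Fin N → ZMod d) × (Fin N → ZMod d)) → ℂ)
    (hΩ₀ : Ω₀ = fun q => if q.1 = q.2 then (((Real.sqrt (d ^ N))⁻¹ : ℝ) : ℂ) else 0)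
    (P Pbar : (Fin p → ZMod d) → Matrix (Fin N → ZMod d) (Fin N → ZMod d) ℂ)
    (hP : ∀ a, P a = Matrix.of (fun r r' =>
      ∑ k : Fin (N - p) → ZMod d, U r (ι (a, k)) * star (U r' (ι (a, k)))))
    (hPbar : ∀ b, Pbar b = Matrix.of (fun r r' =>
      ∑ k : Fin (N - p) → ZMod d, star (U r (ι (b, k))) * U r' (ι (b, k))))
    (a b : Fin p → ZMod d)
    (v : ((Fin N → ZMod d) × (Fin N → ZMod d)) → ℂ)
    (hv : v = (Uᴴ ⊗ₖ Uᵀ).mulVec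
      ((P a ⊗ₖ Pbar b).mulVec
        ((weylN d N e ⊗ₖ (1 : Matrix (Fin N → ZMod d) (Fin N → ZMod d) ℂ)).mulVec Ω₀))) :
    (∀ (x y : Fin p → ZMod d) (k k' : Fin (N - p) → ZMod d),
      v (ι (x, k), ι (y, k')) =
        if a = b + s ∧ x = a ∧ y = b
        then (((Real.sqrt (d ^ N))⁻¹ : ℝ) : ℂ) * T a k k' else 0) ∧
    (a ≠ b + s →
      (P a ⊗ₖ Pbar b).mulVec
        ((weylN d N e ⊗ₖ (1 : Matrix (Fin N → ZMod d) (Fin N → ZMod d) ℂ)).mulVec Ω₀) = 0) := by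
  classical
  subst hs hΩ₀ hv
  set c : ℂ := (((Real.sqrt (d ^ N))⁻¹ : ℝ) : ℂ) with hc
  have hU1 : Uᴴ * U = 1 := hU.1
  have hU2 : U * Uᴴ = 1 := hU.2
  have horth1 : ∀ i j, (∑ r, star (U r i) * U r j) = if i = j then (1 : ℂ) else 0 := by
    intro i j
    have h := congrFun (congrFun hU1 i) j
    rw [Matrix.mul_apply] at h
    simpa [Matrix.conjTranspose_apply, Matrix.one_apply] using h
  -- Uᴴ * P z
  have hUP : ∀ z, Uᴴ * P z = Matrix.of (fun i r' =>
      if (ι.symm i).1 = z then star (U r' i) else 0) := by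
    intro z
    ext i r'
    rw [Matrix.mul_apply]
    simp only [hP, Matrix.of_apply, Matrix.conjTranspose_apply]
    simp_rw [Finset.mul_sum]
    rw [Finset.sum_comm]
    have hterm : ∀ k, (∑ r, star (U r i) * (U r (ι (z, k)) * star (U r' (ι (z, k))))) =
        if i = ι (z, k) then star (U r' (ι (z, k))) else 0 := by
      intro k
      simp_rw [← mul_assoc]
      rw [← Finset.sum_mul, horth1]
      split_ifs <;> simp
    simp_rw [hterm]
    exact sum_ite_encode ι z i (fun j => star (U r' j))
  -- P z * U
  have hPU : ∀ z, P z * U = Matrix.of (fun r i' =>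
      if (ι.symm i').1 = z then U r i' else 0) := by
    intro z
    ext r i'
    rw [Matrix.mul_apply]
    simp only [hP, Matrix.of_apply]
    simp_rw [Finset.sum_mul]
    rw [Finset.sum_comm]
    have hterm : ∀ k, (∑ q, U r (ι (z, k)) * star (U q (ι (z, k))) * U q i') =
        if i' = ι (z, k) then U r (ι (z, k)) else 0 := by
      intro k
      simp_rw [mul_assoc]
      rw [← Finset.mul_sum, horth1]
      by_cases h : ι (z, k) = i'
      · rw [if_pos h, if_pos h.symm, mul_one]
      · rw [if_neg h, if_neg (fun h' => h h'.symm), mul_zero]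
    simp_rw [hterm]
    exact sum_ite_encode ι z i' (fun j => U r j)
  have hPbarT : (Pbar b)ᵀ = P b := by
    ext r r'
    simp [hP, hPbar, Matrix.transpose_apply, mul_comm]
  -- step 1 : (W ⊗ 1) Ω₀
  have hw1 : ((weylN d N e ⊗ₖ (1 : Matrix (Fin N → ZMod d) (Fin N → ZMod d) ℂ)).mulVec
      (fun q => if q.1 = q.2 then c else 0)) = fun q => c * weylN d N e q.1 q.2 := by
    funext q
    rw [Matrix.mulVec, dotProduct, Fintype.sum_prod_type]
    simp [Matrix.kroneckerMap_apply, Matrix.one_apply, mul_ite, ite_and,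
      Finset.sum_ite_eq, Finset.sum_ite_eq', mul_comm]
  -- step 2
  have hw2 : ((P a ⊗ₖ Pbar b).mulVec (fun q => c * weylN d N e q.1 q.2)) =
      fun q => c * (P a * weylN d N e * (Pbar b)ᵀ) q.1 q.2 := by
    funext q
    rw [Matrix.mulVec, dotProduct, Fintype.sum_prod_type]
    simp only [Matrix.kroneckerMap_apply, Matrix.mul_apply, Matrix.transpose_apply]
    rw [Finset.mul_sum]
    simp_rw [Finset.sum_mul, Finset.mul_sum]
    rw [Finset.sum_comm]
    refine Finset.sum_congr rfl fun q2 _ => Finset.sum_congr rfl fun q1 _ => by ring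
  -- step 3
  have hv3 : ∀ X : Matrix (Fin N → ZMod d) (Fin N → ZMod d) ℂ,
      ((Uᴴ ⊗ₖ Uᵀ).mulVec (fun q => c * X q.1 q.2)) =
      fun q => c * (Uᴴ * X * U) q.1 q.2 := by
    intro X
    funext q
    rw [Matrix.mulVec, dotProduct, Fintype.sum_prod_type]
    simp only [Matrix.kroneckerMap_apply, Matrix.mul_apply, Matrix.transpose_apply]
    rw [Finset.mul_sum]
    simp_rw [Finset.sum_mul, Finset.mul_sum]
    rw [Finset.sum_comm]
    refine Finset.sum_congr rfl fun q1 _ => Finset.sum_congr rfl fun q2 _ => by ring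
  -- the conjugated matrix
  have hKmat : Uᴴ * (P a * weylN d N e * (Pbar b)ᵀ) * U =
      Matrix.of (fun i i' => if (ι.symm i).1 = a ∧ (ι.symm i').1 = b
        then (Uᴴ * weylN d N e * U) i i' else 0) := by
    rw [hPbarT]
    have hassoc : Uᴴ * (P a * weylN d N e * P b) * U =
        (Uᴴ * P a) * weylN d N e * (P b * U) := by
      simp only [Matrix.mul_assoc]
    rw [hassoc, hUP, hPU]
    ext i i'
    by_cases h1 : (ι.symm i).1 = a
    · by_cases h2 : (ι.symm i').1 = b
      · simp only [Matrix.mul_apply, Matrix.of_apply, h1, h2, if_true, and_self,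
          Matrix.conjTranspose_apply]
      · simp [Matrix.mul_apply, h2]
    · simp [Matrix.mul_apply, h1]
  have hMzero : a ≠ b + (fun j => symp d N (g j) e) →
      Matrix.of (fun i i' => if (ι.symm i).1 = a ∧ (ι.symm i').1 = b
        then (Uᴴ * weylN d N e * U) i i' else 0) = 0 := by
    intro hab
    ext i i'
    simp only [Matrix.of_apply, Matrix.zero_apply]
    split_ifs with h
    · obtain ⟨h1, h2⟩ := h
      have hTT := hT (ι.symm i').1 (ι.symm i).1 (ι.symm i').2 (ι.symm i).2
      simp only [Prod.mk.eta, Equiv.apply_symm_apply] at hTT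
      rw [hTT, if_neg]
      intro hcon
      exact hab (by rwa [h1, h2] at hcon)
    · rfl
  have hconj : ∀ X : Matrix (Fin N → ZMod d) (Fin N → ZMod d) ℂ,
      U * (Uᴴ * X * U) * Uᴴ = X := by
    intro X
    rw [← Matrix.mul_assoc U (Uᴴ * X) U, Matrix.mul_assoc (U * (Uᴴ * X)) U Uᴴ, hU2,
      Matrix.mul_one, ← Matrix.mul_assoc U Uᴴ X, hU2, Matrix.one_mul]
  constructor
  · intro x y k k'
    rw [hw1, hw2, hv3, hKmat]
    simp only [Matrix.of_apply, Equiv.symm_apply_apply]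
    have hTT := hT y x k' k
    rw [hTT]
    by_cases hxa : x = a
    · by_cases hyb : y = b
      · subst hxa hyb
        by_cases hab : x = y + (fun j => symp d N (g j) e)
        · simp [hab]
        · simp [hab]
      · simp [hyb]
    · simp [hxa]
  · intro hab
    rw [hw1, hw2]
    have hX : P a * weylN d N e * (Pbar b)ᵀ = 0 := by
      have h4 : Uᴴ * (P a * weylN d N e * (Pbar b)ᵀ) * U = 0 := by
        rw [hKmat]
        exact hMzero hab
      calc P a * weylN d N e * (Pbar b)ᵀ
          = U * (Uᴴ * (P a * weylN d N e * (Pbar b)ᵀ) * U) * Uᴴ := (hconj _).symm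
        _ = 0 := by rw [h4]; simp
    funext q
    simp [hX]


end
end

section
/- Let d be an odd prime, a, b ∈ ZMod d with b ≠ 0, and for λ ∈ ZMod d define v_λ ∈ ℂ^{ZMod d} by (v_λ)_j := d^{−1/2} ω^{Γ_{λ,j}} with Γ_{λ,j} := j b^{−1} λ − 2^{−1} (j b^{−1})(j b^{−1} − 1) a b ∈ ZMod d. Then W_{a,b} v_λ = ω^λ v_λ for every λ ∈ ZMod d, and the family (v_λ)_{λ ∈ ZMod d} is an orthonormal basis of ℂ^{ZMod d}. -/
open Matrix Complex

noncomputable section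

/-- Γ_{λ,j} = j b⁻¹ λ − 2⁻¹ (j b⁻¹)(j b⁻¹ − 1) a b. -/
def gam (d : ℕ) (a b lam j : ZMod d) : ZMod d :=
  j * b⁻¹ * lam - 2⁻¹ * (j * b⁻¹) * (j * b⁻¹ - 1) * (a * b)

/-- The eigenvector v_λ of W_{a,b}: (v_λ)_j = d^{−1/2} ω^{Γ_{λ,j}}. -/
def vlam (d : ℕ) (a b lam : ZMod d) : ZMod d → ℂ :=
  fun j => (((Real.sqrt d)⁻¹ : ℝ) : ℂ) * omga d ^ (gam d a b lam j).val

/-!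
The map `m ↦ ω ^ m.val` is the standard additive character `ψ` of `ZMod d`, so
`v_λ j = d^(-1/2) ψ (Γ_{λ,j})`. Replacing `j` by `j + b` raises `j b⁻¹` by one, and then
`j a + Γ_{λ,j+b} = λ + Γ_{λ,j}` (this is where `2` must be invertible): that is the eigenvalue
equation. The difference `Γ_{μ,j} - Γ_{λ,j} = j b⁻¹ (μ - λ)` is linear in `j`, so `⟪v_λ, v_μ⟫`
is `d⁻¹` times a sum of `ψ` along a line, which vanishes unless `λ = μ`. Finally `d`
orthonormal vectors of `ℂ^d` span it.
-/

open ZMod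

theorem linearIndependent_of_star_dotProduct_eq_ite {ι n R : Type*} [Fintype ι] [Fintype n]
    [DecidableEq ι] [CommRing R] [StarRing R] (v : ι → n → R)
    (hv : ∀ i j, star (v i) ⬝ᵥ v j = if i = j then 1 else 0) : LinearIndependent R v := by
  rw [Fintype.linearIndependent_iff]
  intro g hg i
  simpa [dotProduct_sum, dotProduct_smul, hv] using congrArg (star (v i) ⬝ᵥ ·) hg

lemma omga_pow_val (d : ℕ) [NeZero d] (m : ZMod d) : omga d ^ m.val = stdAddChar m := by
  rw [omga, ← Complex.exp_nat_mul, stdAddChar_apply, toCircle_apply]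
  ring_nf

lemma weyl_mulVec_apply (d : ℕ) [NeZero d] (k l : ZMod d) (v : ZMod d → ℂ) (j : ZMod d) :
    (weyl d k l *ᵥ v) j = omga d ^ (j * k).val * v (j + l) := by
  simp [weyl, mulVec, dotProduct]

lemma vlam_apply (d : ℕ) [NeZero d] (a b lam j : ZMod d) :
    vlam d a b lam j = ((√d)⁻¹ : ℂ) * stdAddChar (gam d a b lam j) := by
  simp [vlam, omga_pow_val]

lemma gam_sub_gam (d : ℕ) (a b lam mu j : ZMod d) :
    gam d a b mu j - gam d a b lam j = j * (b⁻¹ * (mu - lam)) := by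
  simp only [gam]
  ring

lemma star_vlam_mul_vlam (d : ℕ) [NeZero d] (a b lam mu j : ZMod d) :
    star (vlam d a b lam j) * vlam d a b mu j
      = (d : ℂ)⁻¹ * stdAddChar (j * (b⁻¹ * (mu - lam))) := by
  have hsqrt : (√d : ℂ)⁻¹ * (√d : ℂ)⁻¹ = (d : ℂ)⁻¹ := by
    rw [← mul_inv, ← Complex.ofReal_mul, Real.mul_self_sqrt d.cast_nonneg, Complex.ofReal_natCast]
  rw [← gam_sub_gam d a, sub_eq_neg_add, AddChar.map_add_eq_mul, AddChar.map_neg_eq_conj,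
    vlam_apply, vlam_apply, star_mul', star_inv₀, Complex.star_def, Complex.conj_ofReal, ← hsqrt]
  ring

section Field

variable {d : ℕ} [Fact d.Prime] (a : ZMod d) {b : ZMod d}

lemma mul_add_gam_add_right (h2 : (2 : ZMod d) ≠ 0) (hb : b ≠ 0) (lam j : ZMod d) :
    j * a + gam d a b lam (j + b) = lam + gam d a b lam j := by
  simp only [gam]
  field_simp
  ring

theorem weyl_mulVec_vlam (h2 : (2 : ZMod d) ≠ 0) (hb : b ≠ 0) (lam : ZMod d) :
    weyl d a b *ᵥ vlam d a b lam = omga d ^ lam.val • vlam d a b lam := by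
  ext j
  simp only [weyl_mulVec_apply, vlam_apply, Pi.smul_apply, smul_eq_mul, omga_pow_val]
  rw [mul_left_comm, ← AddChar.map_add_eq_mul, mul_left_comm, ← AddChar.map_add_eq_mul,
    mul_add_gam_add_right a h2 hb]

theorem star_vlam_dotProduct_vlam (hb : b ≠ 0) (lam mu : ZMod d) :
    star (vlam d a b lam) ⬝ᵥ vlam d a b mu = if lam = mu then 1 else 0 := by
  simp only [dotProduct, Pi.star_apply]
  rw [Finset.sum_congr rfl fun j _ => star_vlam_mul_vlam d a b lam mu j,
    ← Finset.mul_sum, AddChar.sum_mulShift _ (isPrimitive_stdAddChar d)]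
  by_cases h : lam = mu
  · simp [h, ZMod.card, NeZero.ne d]
  · simp [h, hb, sub_eq_zero, Ne.symm h]

end Field

/-- for an odd prime d and b ≠ 0, the vectors v_λ satisfy
W_{a,b} v_λ = ω^λ v_λ and form an orthonormal basis of ℂ^{ZMod d}. -/
theorem weyl_eigenbasis
    (d : ℕ) [NeZero d] (hd : d.Prime) (hodd : Odd d)
    (a b : ZMod d) (hb : b ≠ 0) :
    (∀ lam : ZMod d,
      (weyl d a b).mulVec (vlam d a b lam) = (omga d ^ lam.val) • vlam d a b lam) ∧
    (∀ lam mu : ZMod d,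
      star (vlam d a b lam) ⬝ᵥ vlam d a b mu = if lam = mu then 1 else 0) ∧
    Submodule.span ℂ (Set.range (vlam d a b)) = ⊤ := by
  have := Fact.mk hd
  have h2 : (2 : ZMod d) ≠ 0 := by
    refine Ring.two_ne_zero ?_
    rw [ZMod.ringChar_zmod_n]
    rintro rfl
    exact (Nat.not_odd_iff_even.mpr even_two) hodd
  have horth := star_vlam_dotProduct_vlam a hb
  refine ⟨weyl_mulVec_vlam a h2 hb, horth, ?_⟩
  exact (linearIndependent_of_star_dotProduct_eq_ite _ horth).span_eq_top_of_card_eq_finrank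
    (by simp)

end
end

section
/- Let d be an odd prime, a, b ∈ ZMod d with b ≠ 0, and let v_λ ∈ ℂ^{ZMod d} (λ ∈ ZMod d) be the eigenvector basis of W_{a,b} given by (v_λ)_j := d^{−1/2} ω^{Γ_{λ,j}} with Γ_{λ,j} := j b^{−1} λ − 2^{−1} (j b^{−1})(j b^{−1} − 1) a b. Then for all x, y, λ ∈ ZMod d: W_{x,y} v_λ = ω^{Φ} v_{λ + bx − ay}, where Φ := y b^{−1} (λ − 2^{−1} a (y − b)) ∈ ZMod d. In particular, the phase Φ depends linearly on λ and the eigenvalue label is shifted by the symplectic product bx − ay. -/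
open Matrix Complex

noncomputable section

lemma omga_pow_d (d : ℕ) [NeZero d] : omga d ^ d = 1 := by
  rw [omga, ← Complex.exp_nat_mul]
  have hd : (d : ℂ) ≠ 0 := Nat.cast_ne_zero.mpr (NeZero.ne d)
  rw [mul_div_cancel₀ _ hd]
  simpa [mul_comm] using Complex.exp_two_pi_mul_I

lemma omga_pow_add (d : ℕ) [NeZero d] (m n : ZMod d) :
    omga d ^ (m + n).val = omga d ^ m.val * omga d ^ n.val := by
  rw [← pow_add, ZMod.val_add, ← pow_eq_pow_mod _ (omga_pow_d d)]

/-- for an odd prime d and b ≠ 0, the Weyl operator W_{x,y} acts on the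
eigenvector basis (v_λ) of W_{a,b} by W_{x,y} v_λ = ω^Φ v_{λ + bx − ay} with
Φ = y b⁻¹ (λ − 2⁻¹ a (y − b)). -/
theorem weyl_action_on_eigenbasis
    (d : ℕ) [NeZero d] (hd : d.Prime) (hodd : Odd d)
    (a b : ZMod d) (hb : b ≠ 0) :
    ∀ x y lam : ZMod d,
      (weyl d x y).mulVec (vlam d a b lam) =
        (omga d ^ (y * b⁻¹ * (lam - 2⁻¹ * a * (y - b))).val) •
          vlam d a b (lam + b * x - a * y) := by
  haveI := Fact.mk hd
  have h2 : (2 : ZMod d) ≠ 0 := by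
    intro h
    have h2' : (d : ℕ) ∣ 2 :=
      (ZMod.natCast_eq_zero_iff 2 d).mp (by exact_mod_cast h)
    have hd2 := (Nat.prime_dvd_prime_iff_eq hd Nat.prime_two).mp h2'
    rw [hd2] at hodd
    simp [Nat.odd_iff] at hodd
  intro x y lam
  funext j
  have key : j * x + gam d a b lam (j + y) =
      y * b⁻¹ * (lam - 2⁻¹ * a * (y - b)) + gam d a b (lam + b * x - a * y) j := by
    unfold gam
    linear_combination (-(j*x + j*b⁻¹*a*y + 2⁻¹*y^2*b⁻¹*a)) * (mul_inv_cancel₀ hb) +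
      (-(j*b⁻¹)*(y*b⁻¹)*a*b) * (mul_inv_cancel₀ h2)
  calc (weyl d x y).mulVec (vlam d a b lam) j
      = omga d ^ (j * x).val * vlam d a b lam (j + y) := by
        simp [weyl, mulVec, dotProduct, ite_mul]
    _ = (((Real.sqrt d)⁻¹ : ℝ) : ℂ) *
        omga d ^ ((j * x) + gam d a b lam (j + y)).val := by
        rw [omga_pow_add]; unfold vlam; ring
    _ = (omga d ^ (y * b⁻¹ * (lam - 2⁻¹ * a * (y - b))).val) •
          vlam d a b (lam + b * x - a * y) j := by
        rw [key, omga_pow_add]; unfold vlam; simp; ring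

end
end

section
/- Let d be a prime and let Y₁, Y₂ be unitary d×d complex matrices. Then for every (k, l) ∈ (ZMod d)²: Σ_{(a,b) ∈ (ZMod d)²} | d^{−1} Tr( W_{k,l}† · Y₁† · W_{a,b} · Y₂ ) |² = 1. -/
/-!
Put `A = Y₂ W_{k,l}† Y₁†`, a unitary matrix. Cycling the trace, the coefficient at `(a, b)` is
`Tr (A W_{a,b}) = ∑ₘ A (m + b) m · ω^{ma}`, the discrete Fourier transform in `a` of the `b`-th
diagonal of `A`. Parseval turns the sum over `a` of its squared modulus into `d` times the squared
norm of that diagonal, and the diagonals of `A` together exhaust its entries, whose squared moduli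
add up to `Tr (A† A) = d`. Hence the total is `d⁻² · d · d = 1`.
-/

open Matrix Complex

noncomputable section

open ComplexConjugate

theorem AddChar.IsPrimitive.sum_sq_norm_sum_mul_apply_mul {R : Type*} [CommRing R] [Fintype R]
    {ψ : AddChar R ℂ} (hψ : ψ.IsPrimitive) (f : R → ℂ) :
    ∑ a, ‖∑ m, f m * ψ (m * a)‖ ^ 2 = Fintype.card R * ∑ m, ‖f m‖ ^ 2 := by
  classical
  have hterm (a m m' : R) : f m * ψ (m * a) * conj (f m' * ψ (m' * a)) =
      f m * conj (f m') * ψ (a * (m - m')) := by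
    rw [map_mul (starRingEnd ℂ), ← ψ.map_neg_eq_conj, mul_mul_mul_comm, ← ψ.map_add_eq_mul]
    ring_nf
  apply Complex.ofReal_injective
  push_cast
  simp_rw [← Complex.mul_conj', map_sum, Finset.sum_mul_sum, hterm]
  rw [Finset.sum_comm, Finset.mul_sum]
  refine Finset.sum_congr rfl fun m _ => ?_
  rw [Finset.sum_comm]
  simp_rw [← Finset.mul_sum, AddChar.sum_mulShift _ hψ, sub_eq_zero]
  simp [mul_comm]

theorem Matrix.sum_sq_norm_col_of_mem_unitaryGroup {n 𝕜 : Type*} [Fintype n] [DecidableEq n]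
    [RCLike 𝕜] {U : Matrix n n 𝕜} (hU : U ∈ unitaryGroup n 𝕜) (j : n) :
    ∑ i, ‖U i j‖ ^ 2 = 1 := by
  have h : (Uᴴ * U) j j = 1 := by
    rw [← star_eq_conjTranspose, mem_unitaryGroup_iff'.mp hU, one_apply_eq]
  simp only [mul_apply, conjTranspose_apply, RCLike.star_def, RCLike.conj_mul] at h
  exact_mod_cast h

theorem omga_pow_val_eq_stdAddChar {d : ℕ} [NeZero d] (x : ZMod d) :
    omga d ^ x.val = ZMod.stdAddChar x := by
  rw [ZMod.stdAddChar_apply, ZMod.toCircle_apply, omga, ← Complex.exp_nat_mul]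
  ring_nf

theorem weyl_apply {d : ℕ} [NeZero d] (k l j j' : ZMod d) :
    weyl d k l j j' = if j' = j + l then ZMod.stdAddChar (j * k) else 0 := by
  simp only [weyl, of_apply, omga_pow_val_eq_stdAddChar]

theorem weyl_mem_unitaryGroup {d : ℕ} [NeZero d] (k l : ZMod d) :
    weyl d k l ∈ unitaryGroup (ZMod d) ℂ := by
  rw [mem_unitaryGroup_iff, star_eq_conjTranspose]
  ext i j
  simp only [mul_apply, conjTranspose_apply, weyl_apply, apply_ite star, star_zero, ite_mul,
    mul_ite, zero_mul, mul_zero, Finset.sum_ite_eq', Finset.mem_univ, if_true, add_left_inj,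
    one_apply]
  by_cases h : i = j
  · subst h
    rw [if_pos rfl, if_pos rfl, RCLike.star_def, ← AddChar.map_neg_eq_conj,
      ← AddChar.map_add_eq_mul, add_neg_cancel, AddChar.map_zero_eq_one]
  · rw [if_neg (Ne.symm h), if_neg h]

theorem trace_mul_weyl {d : ℕ} [NeZero d] (A : Matrix (ZMod d) (ZMod d) ℂ) (a b : ZMod d) :
    (A * weyl d a b).trace = ∑ m, A (m + b) m * ZMod.stdAddChar (m * a) := by
  simp only [trace, diag_apply, mul_apply, weyl_apply, mul_ite, mul_zero]
  rw [Finset.sum_comm]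
  simp only [Finset.sum_ite_eq', Finset.mem_univ, if_true]

theorem twisted_weyl_coefficients_sum_sq_general
    (d : ℕ) [NeZero d]
    (Y₁ Y₂ : Matrix (ZMod d) (ZMod d) ℂ)
    (hY₁ : Y₁ ∈ Matrix.unitaryGroup (ZMod d) ℂ)
    (hY₂ : Y₂ ∈ Matrix.unitaryGroup (ZMod d) ℂ) :
    ∀ k l : ZMod d,
      ∑ ab : ZMod d × ZMod d,
        ‖(1 / (d : ℂ)) * ((weyl d k l)ᴴ * Y₁ᴴ * weyl d ab.1 ab.2 * Y₂).trace‖ ^ 2 = 1 := by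
  intro k l
  set A := Y₂ * (weyl d k l)ᴴ * Y₁ᴴ
  have hA : A ∈ unitaryGroup (ZMod d) ℂ :=
    mul_mem (mul_mem hY₂ (Unitary.star_mem (weyl_mem_unitaryGroup k l))) (Unitary.star_mem hY₁)
  have htrace (a b : ZMod d) :
      ((weyl d k l)ᴴ * Y₁ᴴ * weyl d a b * Y₂).trace = (A * weyl d a b).trace := by
    rw [trace_mul_comm]
    simp only [A, Matrix.mul_assoc]
  calc ∑ ab : ZMod d × ZMod d,
        ‖(1 / (d : ℂ)) * ((weyl d k l)ᴴ * Y₁ᴴ * weyl d ab.1 ab.2 * Y₂).trace‖ ^ 2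
      = (d ^ 2 : ℝ)⁻¹ * ∑ b, ∑ a, ‖∑ m, A (m + b) m * ZMod.stdAddChar (m * a)‖ ^ 2 := by
        rw [Fintype.sum_prod_type, Finset.sum_comm, Finset.mul_sum]
        simp_rw [Finset.mul_sum, norm_mul, mul_pow, htrace, trace_mul_weyl]
        simp
    _ = (d ^ 2 : ℝ)⁻¹ * (d * ∑ m, ∑ i, ‖A i m‖ ^ 2) := by
        simp_rw [(ZMod.isPrimitive_stdAddChar d).sum_sq_norm_sum_mul_apply_mul, ← Finset.mul_sum,
          ZMod.card]
        rw [Finset.sum_comm]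
        congr 3 with m
        exact Fintype.sum_equiv (Equiv.addLeft m) _ _ fun _ => rfl
    _ = 1 := by
        have hd : (d : ℝ) ≠ 0 := Nat.cast_ne_zero.mpr (NeZero.ne d)
        simp_rw [sum_sq_norm_col_of_mem_unitaryGroup hA, Finset.sum_const, Finset.card_univ,
          ZMod.card, nsmul_eq_mul, mul_one]
        field_simp

/-- for unitary Y₁, Y₂ and any (k,l), the squared moduli of the coefficients
d^{−1} Tr(W_{k,l}† Y₁† W_{a,b} Y₂) over all (a,b) sum to 1. -/
theorem twisted_weyl_coefficients_sum_sq
    (d : ℕ) [NeZero d] (hd : d.Prime)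
    (Y₁ Y₂ : Matrix (ZMod d) (ZMod d) ℂ)
    (hY₁ : Y₁ ∈ Matrix.unitaryGroup (ZMod d) ℂ)
    (hY₂ : Y₂ ∈ Matrix.unitaryGroup (ZMod d) ℂ) :
    ∀ k l : ZMod d,
      ∑ ab : ZMod d × ZMod d,
        ‖(1 / (d : ℂ)) * ((weyl d k l)ᴴ * Y₁ᴴ * weyl d ab.1 ab.2 * Y₂).trace‖ ^ 2 = 1 :=
  twisted_weyl_coefficients_sum_sq_general d Y₁ Y₂ hY₁ hY₂

end
end
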